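/- Let v ∈ C²_c(ℝ³;ℝ³) be a compactly supported C² vector field. Then ∫_{ℝ³} (v|v|) · Δv dx = −∫_{\{v≠0\}} |v| ( |∇v|² + |∇|v||² ) dx, where Δv is the componentwise Laplacian, |∇v|² = Σᵢⱼ (∂ⱼvᵢ)², and on the set {v ≠ 0} the function |v| is differentiable with gradient ∇|v|. -/

import Mathlib

open MeasureTheory ENNReal Real Set Filter
open scoped RealInnerProductSpace Topology
noncomputable section

local notation "E3" => EuclideanSpace ℝ (Fin 3)

/-- `∂ⱼ vᵢ`: the `j`-th partial derivative of the `i`-th component of a vector field. -/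
def pdComp (v : E3 → E3) (i j : Fin 3) (x : E3) : ℝ :=
  fderiv ℝ v x (EuclideanSpace.single j (1:ℝ)) i

/-- Divergence of a vector field on ℝ³. -/
def div3 (v : E3 → E3) (x : E3) : ℝ := ∑ i, pdComp v i i x

/-- `∂ⱼ f`: partial derivative of a scalar function on ℝ³. -/
def pd (f : E3 → ℝ) (j : Fin 3) (x : E3) : ℝ :=
  fderiv ℝ f x (EuclideanSpace.single j (1:ℝ))

/-- Componentwise Laplacian of a vector field on ℝ³. -/
def lap3 (v : E3 → E3) (x : E3) : E3 :=
  ∑ i, (∑ j, pd (fun y => pdComp v i j y) j x) • EuclideanSpace.single i (1:ℝ)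

/-- Mixed space-time norm `L^p(S; L^q(ℝ³))` over a time set `S`. -/
def mixedNorm {F : Type*} [NormedAddCommGroup F] (f : ℝ → E3 → F) (p q : ℝ≥0∞)
    (S : Set ℝ) : ℝ≥0∞ :=
  eLpNorm (fun t => (eLpNorm (f t) q volume).toReal) p (volume.restrict S)

/-- `g` is the distributional (weak) gradient of `f` on ℝ³. -/
def IsWeakGrad (f : E3 → ℝ) (g : E3 → E3) : Prop :=
  ∀ φ : E3 → ℝ, ContDiff ℝ (⊤ : ℕ∞) φ → HasCompactSupport φ →
    ∀ j : Fin 3, ∫ x, f x * pd φ j x = - ∫ x, g x j * φ x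

/-! ### Auxiliary lemmas -/

section Aux

lemma pd_def (f : E3 → ℝ) (j : Fin 3) (x : E3) :
    pd f j x = fderiv ℝ f x (EuclideanSpace.single j (1:ℝ)) := rfl

lemma euclid_norm_sq (a : E3) : ‖a‖ ^ 2 = ∑ j, (a j) ^ 2 := by
  rw [EuclideanSpace.norm_eq, Real.sq_sqrt (by positivity)]
  simp [sq_abs]

lemma comp_le_norm (a : E3) (i : Fin 3) : |a i| ≤ ‖a‖ := by
  have h : (a i) ^ 2 ≤ ‖a‖ ^ 2 := by
    rw [euclid_norm_sq]
    exact Finset.single_le_sum (f := fun j => (a j) ^ 2)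
      (fun j _ => sq_nonneg _) (Finset.mem_univ i)
  calc |a i| = Real.sqrt ((a i) ^ 2) := (Real.sqrt_sq_eq_abs _).symm
    _ ≤ Real.sqrt (‖a‖ ^ 2) := Real.sqrt_le_sqrt h
    _ = ‖a‖ := by rw [Real.sqrt_sq (norm_nonneg _)]

lemma grad_comp (f : E3 → ℝ) (x : E3) (j : Fin 3) :
    gradient f x j = fderiv ℝ f x (EuclideanSpace.single j (1:ℝ)) := by
  have h : ⟪gradient f x, EuclideanSpace.single j (1:ℝ)⟫ =
      fderiv ℝ f x (EuclideanSpace.single j (1:ℝ)) := by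
    simp [gradient, InnerProductSpace.toDual_symm_apply]
  rw [← h, EuclideanSpace.inner_single_right]
  simp

lemma inner_fderiv_sum (v : E3 → E3) (x : E3) (j : Fin 3) :
    ⟪v x, fderiv ℝ v x (EuclideanSpace.single j (1:ℝ))⟫ = ∑ i, v x i * pdComp v i j x := by
  rw [PiLp.inner_apply]
  refine Finset.sum_congr rfl fun i _ => ?_
  simp [pdComp, mul_comm]

open Classical in
/-- Candidate (everywhere) derivative of `x ↦ ‖v x‖ • v x`. -/
def Wd (v : E3 → E3) (x : E3) : E3 →L[ℝ] E3 :=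
  if v x = 0 then 0 else
    ‖v x‖ • fderiv ℝ v x +
      (‖v x‖⁻¹ • ((innerSL ℝ (v x)).comp (fderiv ℝ v x))).smulRight (v x)

theorem hasFDerivAt_norm_of_ne {v : E3 → E3} (hv : Differentiable ℝ v) {x : E3}
    (hx : v x ≠ 0) :
    HasFDerivAt (fun y => ‖v y‖)
      (‖v x‖⁻¹ • ((innerSL ℝ (v x)).comp (fderiv ℝ v x))) x := by
  have hd := (hv x).hasFDerivAt
  have hsq : HasFDerivAt (fun y => ‖v y‖ ^ 2)
      (2 • ((innerSL ℝ (v x)).comp (fderiv ℝ v x))) x := hd.norm_sq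
  have hnx : (0:ℝ) < ‖v x‖ := norm_pos_iff.2 hx
  have hsqrt : HasDerivAt Real.sqrt (1 / (2 * Real.sqrt (‖v x‖ ^ 2))) (‖v x‖ ^ 2) :=
    Real.hasDerivAt_sqrt (by positivity)
  have h := hsqrt.comp_hasFDerivAt x hsq
  simp only [Function.comp_def] at h
  have heq : (fun y => Real.sqrt (‖v y‖ ^ 2)) = fun y => ‖v y‖ := by
    funext y; rw [Real.sqrt_sq (norm_nonneg _)]
  rw [heq] at h
  refine h.congr_fderiv ?_
  ext h'
  simp [Real.sqrt_sq hnx.le]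
  ring

lemma pd_norm_eq {v : E3 → E3} (hv : Differentiable ℝ v) (j : Fin 3) (x : E3)
    (hx : v x ≠ 0) :
    pd (fun z => ‖v z‖) j x =
      ‖v x‖⁻¹ * ⟪v x, fderiv ℝ v x (EuclideanSpace.single j (1:ℝ))⟫ := by
  rw [pd, (hasFDerivAt_norm_of_ne hv hx).fderiv]
  simp

theorem hasFDerivAt_normSmul {v : E3 → E3} (hv : Differentiable ℝ v) (x : E3) :
    HasFDerivAt (fun y => ‖v y‖ • v y) (Wd v x) x := by
  rcases eq_or_ne (v x) 0 with hx | hx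
  · rw [Wd]; rw [if_pos hx]
    rw [HasFDerivAt, hasFDerivAtFilter_iff_isLittleO]
    simp only [hx, norm_zero, zero_smul, sub_zero, ContinuousLinearMap.zero_apply]
    have h1 : (fun y => ‖v y‖) =o[𝓝 x] (fun _ => (1:ℝ)) := by
      rw [Asymptotics.isLittleO_one_iff]
      have hc : ContinuousAt v x := (hv x).continuousAt
      have : Filter.Tendsto (fun y => ‖v y‖) (𝓝 x) (𝓝 ‖v x‖) :=
        (continuous_norm.continuousAt).comp hc
      simpa [hx] using this
    have h2 : (fun y => v y) =O[𝓝 x] fun y => y - x := by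
      simpa [hx] using (hv x).hasFDerivAt.isBigO_sub
    simpa [Function.comp_def, hx] using h1.smul_isBigO h2
  · have h := (hasFDerivAt_norm_of_ne hv hx).smul (hv x).hasFDerivAt
    rw [Wd]; rw [if_neg hx]
    exact h

lemma Wd_apply_ne {v : E3 → E3} {x : E3} (hx : v x ≠ 0) (i j : Fin 3) :
    Wd v x (EuclideanSpace.single j (1:ℝ)) i =
      ‖v x‖ * pdComp v i j x +
        (‖v x‖⁻¹ * ⟪v x, fderiv ℝ v x (EuclideanSpace.single j (1:ℝ))⟫) * v x i := by
  rw [Wd, if_neg hx]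
  simp only [ContinuousLinearMap.add_apply, ContinuousLinearMap.smul_apply,
    ContinuousLinearMap.smulRight_apply, ContinuousLinearMap.comp_apply, innerSL_apply_apply,
    PiLp.add_apply, PiLp.smul_apply, smul_eq_mul]
  rfl

lemma Wd_eq_zero {v : E3 → E3} {x : E3} (hx : v x = 0) : Wd v x = 0 := by
  rw [Wd, if_pos hx]

lemma Wd_norm_le (v : E3 → E3) (x : E3) :
    ‖Wd v x‖ ≤ 2 * ‖v x‖ * ‖fderiv ℝ v x‖ := by
  rcases eq_or_ne (v x) 0 with hx | hx
  · rw [Wd, if_pos hx]; simp; positivity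
  · rw [Wd, if_neg hx]
    refine ContinuousLinearMap.opNorm_le_bound _ (by positivity) fun h => ?_
    have hN : (0:ℝ) < ‖v x‖ := norm_pos_iff.2 hx
    calc ‖(‖v x‖ • fderiv ℝ v x +
          (‖v x‖⁻¹ • ((innerSL ℝ (v x)).comp (fderiv ℝ v x))).smulRight (v x)) h‖
        ≤ ‖(‖v x‖ • fderiv ℝ v x) h‖ +
          ‖(‖v x‖⁻¹ * ⟪v x, fderiv ℝ v x h⟫) • v x‖ := by
          rw [ContinuousLinearMap.add_apply]
          refine (norm_add_le _ _).trans ?_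
          simp [ContinuousLinearMap.smulRight_apply]
      _ ≤ ‖v x‖ * (‖fderiv ℝ v x‖ * ‖h‖) +
          ‖v x‖⁻¹ * (‖v x‖ * (‖fderiv ℝ v x‖ * ‖h‖)) * ‖v x‖ := by
          gcongr
          · rw [ContinuousLinearMap.smul_apply, norm_smul, norm_norm]
            gcongr
            exact (fderiv ℝ v x).le_opNorm h
          · rw [norm_smul]
            gcongr
            rw [norm_mul, norm_inv, norm_norm]
            gcongr
            calc |⟪v x, fderiv ℝ v x h⟫| ≤ ‖v x‖ * ‖fderiv ℝ v x h‖ :=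
                  abs_real_inner_le_norm _ _
              _ ≤ ‖v x‖ * (‖fderiv ℝ v x‖ * ‖h‖) := by
                  gcongr; exact (fderiv ℝ v x).le_opNorm h
      _ = 2 * ‖v x‖ * ‖fderiv ℝ v x‖ * ‖h‖ := by field_simp; ring

lemma contDiff_pdComp {v : E3 → E3} (hv : ContDiff ℝ 2 v) (i j : Fin 3) :
    ContDiff ℝ 1 (fun x => pdComp v i j x) := by
  have h1 : ContDiff ℝ 1 (fderiv ℝ v) := hv.fderiv_right (by norm_num)
  have h2 : ContDiff ℝ 1 (fun x => fderiv ℝ v x (EuclideanSpace.single j (1:ℝ))) :=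
    (ContinuousLinearMap.apply ℝ (EuclideanSpace ℝ (Fin 3))
      (EuclideanSpace.single j (1:ℝ))).contDiff.comp h1
  exact (EuclideanSpace.proj i).contDiff.comp h2

lemma alg_identity (N : ℝ) (p : Fin 3 → Fin 3 → ℝ) (q u : Fin 3 → ℝ)
    (hsum : ∀ j, ∑ i, u i * p i j = N * q j) :
    ∑ i, ∑ j, (N * p i j + q j * u i) * p i j =
      N * ((∑ i, ∑ j, p i j ^ 2) + ∑ j, q j ^ 2) := by
  calc ∑ i, ∑ j, (N * p i j + q j * u i) * p i j
      = ∑ j, ∑ i, (N * p i j ^ 2 + q j * (u i * p i j)) := by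
        rw [Finset.sum_comm]
        exact Finset.sum_congr rfl fun j _ => Finset.sum_congr rfl fun i _ => by ring
    _ = ∑ j, (N * (∑ i, p i j ^ 2) + q j * (N * q j)) := by
        refine Finset.sum_congr rfl fun j _ => ?_
        rw [Finset.sum_add_distrib, ← Finset.mul_sum, ← Finset.mul_sum, hsum j]
    _ = N * (∑ j, ∑ i, p i j ^ 2) + N * (∑ j, q j ^ 2) := by
        rw [Finset.sum_add_distrib, ← Finset.mul_sum]
        congr 1
        rw [Finset.mul_sum]
        refine Finset.sum_congr rfl fun j _ => by ring
    _ = N * ((∑ i, ∑ j, p i j ^ 2) + ∑ j, q j ^ 2) := by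
        rw [Finset.sum_comm]; ring

theorem pointwise_identity {v : E3 → E3} (hv : Differentiable ℝ v)
    {x : E3} (hx : v x ≠ 0) :
    ∑ i, ∑ j, Wd v x (EuclideanSpace.single j (1:ℝ)) i * pdComp v i j x =
      ‖v x‖ * ((∑ i, ∑ j, pdComp v i j x ^ 2) +
        ‖gradient (fun z => ‖v z‖) x‖ ^ 2) := by
  have hN : (0:ℝ) < ‖v x‖ := norm_pos_iff.2 hx
  have hq' : ∀ j : Fin 3, pd (fun z => ‖v z‖) j x =
      ‖v x‖⁻¹ * ∑ i, v x i * pdComp v i j x := fun j => by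
    rw [pd_norm_eq hv j x hx, inner_fderiv_sum]
  have hgrad : ‖gradient (fun z => ‖v z‖) x‖ ^ 2 =
      ∑ j, (pd (fun z => ‖v z‖) j x) ^ 2 := by
    rw [euclid_norm_sq]
    congr 1; funext j
    rw [grad_comp]; rfl
  have hsum : ∀ j : Fin 3, ∑ i, v x i * pdComp v i j x =
      ‖v x‖ * pd (fun z => ‖v z‖) j x := fun j => by
    rw [hq' j]; field_simp
  have hW : ∀ i j : Fin 3, Wd v x (EuclideanSpace.single j (1:ℝ)) i =
      ‖v x‖ * pdComp v i j x + pd (fun z => ‖v z‖) j x * v x i := fun i j => by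
    rw [Wd_apply_ne hx, pd_norm_eq hv j x hx]
  rw [hgrad]
  rw [show (∑ i, ∑ j, Wd v x (EuclideanSpace.single j (1:ℝ)) i * pdComp v i j x) =
      ∑ i, ∑ j, (‖v x‖ * pdComp v i j x + pd (fun z => ‖v z‖) j x * v x i)
        * pdComp v i j x from
    Finset.sum_congr rfl fun i _ => Finset.sum_congr rfl fun j _ => by rw [hW i j]]
  exact alg_identity _ _ _ _ hsum

end Aux

/-- Integration by parts for the dissipation term: for a compactly supported `C²`
vector field `v` on ℝ³, `∫ (v|v|)·Δv = −∫_{v≠0} |v|(|∇v|² + |∇|v||²)`. -/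
theorem dissipation_identity (v : E3 → E3) (hv : ContDiff ℝ 2 v)
    (hsupp : HasCompactSupport v) :
    ∫ x, ⟪‖v x‖ • v x, lap3 v x⟫ =
      - ∫ x in {y : E3 | v y ≠ 0},
          ‖v x‖ * ((∑ i, ∑ j, pdComp v i j x ^ 2) +
            ‖gradient (fun z => ‖v z‖) x‖ ^ 2) := by
  have hv1 : Differentiable ℝ v := hv.differentiable (by norm_num)
  have hvc : Continuous v := hv1.continuous
  have hfd : Continuous (fderiv ℝ v) := (hv.fderiv_right (m := 1) (by norm_num)).continuous
  -- the vector field `w = ‖v‖ • v` and its components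
  set w : E3 → E3 := fun y => ‖v y‖ • v y with hw
  have hWd : ∀ x, HasFDerivAt w (Wd v x) x := hasFDerivAt_normSmul hv1
  -- continuity / compact support facts
  have hfcont : ∀ i : Fin 3, Continuous (fun x => ‖v x‖ * v x i) := fun i =>
    (continuous_norm.comp hvc).mul ((EuclideanSpace.proj i).continuous.comp hvc)
  have hfcs : ∀ i : Fin 3, HasCompactSupport (fun x => ‖v x‖ * v x i) := fun i => by
    have : HasCompactSupport (fun x => ‖v x‖) := hsupp.norm
    exact this.mul_right
  have hgcont : ∀ i j : Fin 3, Continuous (fun x => pdComp v i j x) := fun i j =>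
    (contDiff_pdComp hv i j).continuous
  have hg'cont : ∀ i j : Fin 3,
      Continuous (fun x => pd (fun y => pdComp v i j y) j x) := fun i j => by
    rw [show (fun x => pd (fun y => pdComp v i j y) j x) =
      fun x => fderiv ℝ (fun y => pdComp v i j y) x (EuclideanSpace.single j (1:ℝ)) from rfl]
    have h1 : Continuous (fderiv ℝ (fun y => pdComp v i j y)) :=
      (contDiff_pdComp hv i j).continuous_fderiv one_ne_zero
    exact (ContinuousLinearMap.apply ℝ ℝ
      (EuclideanSpace.single j (1:ℝ))).continuous.comp h1
  -- integrability facts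
  have hI3 : ∀ i j : Fin 3,
      Integrable (fun x => (‖v x‖ * v x i) * pdComp v i j x) := fun i j =>
    ((hfcont i).mul (hgcont i j)).integrable_of_hasCompactSupport (hfcs i).mul_right
  have hI2 : ∀ i j : Fin 3,
      Integrable (fun x => (‖v x‖ * v x i) *
        pd (fun y => pdComp v i j y) j x) := fun i j =>
    ((hfcont i).mul (hg'cont i j)).integrable_of_hasCompactSupport (hfcs i).mul_right
  have hbound : Continuous (fun x => (2 * ‖v x‖ * ‖fderiv ℝ v x‖) * ‖fderiv ℝ v x‖) := by
    continuity
  have hboundInt : Integrable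
      (fun x => (2 * ‖v x‖ * ‖fderiv ℝ v x‖) * ‖fderiv ℝ v x‖) := by
    refine hbound.integrable_of_hasCompactSupport ?_
    have h1 : HasCompactSupport (fun x => 2 * ‖v x‖) := by
      have := hsupp.norm
      exact this.mul_left
    exact (h1.mul_right).mul_right
  have hWdmeas : ∀ i j : Fin 3,
      AEStronglyMeasurable (fun x => Wd v x (EuclideanSpace.single j (1:ℝ)) i) volume := by
    intro i j
    have heq : (fun x => Wd v x (EuclideanSpace.single j (1:ℝ)) i) =
        fun x => fderiv ℝ w x (EuclideanSpace.single j (1:ℝ)) i := by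
      funext x; rw [(hWd x).fderiv]
    rw [heq]
    have hm : Measurable (fun x => fderiv ℝ w x (EuclideanSpace.single j (1:ℝ))) :=
      measurable_fderiv_apply_const ℝ w _
    exact (((EuclideanSpace.proj i).continuous.measurable).comp hm).aestronglyMeasurable
  have hI1 : ∀ i j : Fin 3,
      Integrable (fun x => Wd v x (EuclideanSpace.single j (1:ℝ)) i * pdComp v i j x) := by
    intro i j
    refine hboundInt.mono' ((hWdmeas i j).mul (hgcont i j).aestronglyMeasurable) ?_
    refine Filter.Eventually.of_forall fun x => ?_
    rw [norm_mul]
    have h1 : ‖Wd v x (EuclideanSpace.single j (1:ℝ)) i‖ ≤ 2 * ‖v x‖ * ‖fderiv ℝ v x‖ := by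
      calc ‖Wd v x (EuclideanSpace.single j (1:ℝ)) i‖
          ≤ ‖Wd v x (EuclideanSpace.single j (1:ℝ))‖ := comp_le_norm _ i
        _ ≤ ‖Wd v x‖ * ‖(EuclideanSpace.single j (1:ℝ) : E3)‖ :=
            (Wd v x).le_opNorm _
        _ = ‖Wd v x‖ := by rw [EuclideanSpace.norm_single]; simp
        _ ≤ 2 * ‖v x‖ * ‖fderiv ℝ v x‖ := Wd_norm_le v x
    have h2 : ‖pdComp v i j x‖ ≤ ‖fderiv ℝ v x‖ := by
      calc ‖pdComp v i j x‖ ≤ ‖fderiv ℝ v x (EuclideanSpace.single j (1:ℝ))‖ :=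
            comp_le_norm _ i
        _ ≤ ‖fderiv ℝ v x‖ * ‖(EuclideanSpace.single j (1:ℝ) : E3)‖ :=
            (fderiv ℝ v x).le_opNorm _
        _ = ‖fderiv ℝ v x‖ := by rw [EuclideanSpace.norm_single]; simp
    have hb : (0:ℝ) ≤ 2 * ‖v x‖ * ‖fderiv ℝ v x‖ := by positivity
    exact mul_le_mul h1 h2 (norm_nonneg _) hb
  -- integration by parts for each pair (i, j)
  have key : ∀ i j : Fin 3,
      ∫ x, (‖v x‖ * v x i) * pd (fun y => pdComp v i j y) j x =
        - ∫ x, Wd v x (EuclideanSpace.single j (1:ℝ)) i * pdComp v i j x := by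
    intro i j
    have hf : ∀ x, HasFDerivAt (fun y => ‖v y‖ * v y i)
        ((EuclideanSpace.proj i).comp (Wd v x)) x := fun x =>
      ((EuclideanSpace.proj (𝕜 := ℝ) i).hasFDerivAt).comp x (hWd x)
    have hg : ∀ x, HasFDerivAt (fun y => pdComp v i j y)
        (fderiv ℝ (fun y => pdComp v i j y) x) x := fun x =>
      ((contDiff_pdComp hv i j).differentiable one_ne_zero x).hasFDerivAt
    have := integral_bilinear_hasFDerivAt_right_eq_neg_left_of_integrable
      (μ := volume) (B := ContinuousLinearMap.mul ℝ ℝ)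
      (v := EuclideanSpace.single j (1:ℝ))
      (f := fun y => ‖v y‖ * v y i) (f' := fun x => (EuclideanSpace.proj i).comp (Wd v x))
      (g := fun y => pdComp v i j y) (g' := fun x => fderiv ℝ (fun y => pdComp v i j y) x)
      ?_ ?_ ?_ (fun x _ => hf x) (fun x _ => hg x)
    · simpa only [ContinuousLinearMap.mul_apply', ← pd_def, ContinuousLinearMap.comp_apply, PiLp.proj_apply] using this
    · simpa using hI1 i j
    · exact hI2 i j
    · exact hI3 i j
  -- expand the inner product with the Laplacian
  have hinner : ∀ x, ⟪w x, lap3 v x⟫ =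
      ∑ i, ∑ j, (‖v x‖ * v x i) * pd (fun y => pdComp v i j y) j x := by
    intro x
    rw [lap3, inner_sum]
    refine Finset.sum_congr rfl fun i _ => ?_
    rw [real_inner_smul_right, EuclideanSpace.inner_single_right]
    simp only [map_one, one_mul]
    rw [Finset.sum_mul]
    refine Finset.sum_congr rfl fun j _ => ?_
    have : (starRingEnd ℝ) (w x i) = ‖v x‖ * v x i := rfl
    rw [this]; ring
  -- put everything together
  calc ∫ x, ⟪w x, lap3 v x⟫
      = ∫ x, ∑ i, ∑ j, (‖v x‖ * v x i) * pd (fun y => pdComp v i j y) j x := by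
        exact integral_congr_ae (Filter.Eventually.of_forall hinner)
    _ = ∑ i, ∑ j, ∫ x, (‖v x‖ * v x i) * pd (fun y => pdComp v i j y) j x := by
        rw [integral_finset_sum _ (fun i _ => integrable_finset_sum _ (fun j _ => hI2 i j))]
        exact Finset.sum_congr rfl fun i _ =>
          integral_finset_sum _ (fun j _ => hI2 i j)
    _ = ∑ i, ∑ j, - ∫ x, Wd v x (EuclideanSpace.single j (1:ℝ)) i * pdComp v i j x := by
        exact Finset.sum_congr rfl fun i _ => Finset.sum_congr rfl fun j _ => key i j
    _ = - ∫ x, ∑ i, ∑ j, Wd v x (EuclideanSpace.single j (1:ℝ)) i * pdComp v i j x := by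
        rw [integral_finset_sum _ (fun i _ => integrable_finset_sum _ (fun j _ => hI1 i j))]
        rw [← Finset.sum_neg_distrib]
        refine Finset.sum_congr rfl fun i _ => ?_
        rw [integral_finset_sum _ (fun j _ => hI1 i j), ← Finset.sum_neg_distrib]
    _ = - ∫ x in {y : E3 | v y ≠ 0},
          ∑ i, ∑ j, Wd v x (EuclideanSpace.single j (1:ℝ)) i * pdComp v i j x := by
        congr 1
        rw [setIntegral_eq_integral_of_forall_compl_eq_zero]
        intro x hx
        simp only [mem_setOf_eq, not_not] at hx
        simp [Wd_eq_zero hx]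
    _ = - ∫ x in {y : E3 | v y ≠ 0},
          ‖v x‖ * ((∑ i, ∑ j, pdComp v i j x ^ 2) +
            ‖gradient (fun z => ‖v z‖) x‖ ^ 2) := by
        congr 1
        refine setIntegral_congr_fun ?_ ?_
        · have : {y : E3 | v y ≠ 0} = (v ⁻¹' {0})ᶜ := rfl
          rw [this]
          exact (isClosed_singleton.preimage hvc).measurableSet.compl
        · intro x hx
          exact pointwise_identity hv1 hx
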